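/- There is an explicit bijection \Phi between the set M_k of k-tuples (m_1,\ldots,m_k) of non-negative integers with \sum m_i = k and \sum_{i \le h} m_i \ge h for h < k, and the set Y_k of planar binary trees with k internal vertices, defined recursively by: \Phi((1)) = Y (the tree with one internal vertex); \Phi(m) = \Phi(m') \backslash \Phi(m'') if m concatenates as m' \in M_l followed by m'' \in M_{k-l}; and \Phi((m_1,\ldots,m_{k-1},0)) = \Phi((m_1-1,m_2,\ldots,m_{k-1})) / Y if m is indecomposable (in which case necessarily m_1 > 1 and m_k = 0). -/

import Mathlib

/-- Rooted planar binary trees: a tree is either a leaf or an internal node with a left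
and a right subtree (`node l r = l ∨ r`). -/
inductive PBT : Type
  | leaf : PBT
  | node : PBT → PBT → PBT
deriving DecidableEq

/-- The number of internal vertices of a planar binary tree. -/
def PBT.size : PBT → ℕ
  | .leaf => 0
  | .node l r => l.size + r.size + 1

/-- `over t s = t / s`: grafting of the root of `t` on the left-most leaf of `s`. -/
def treeOver : PBT → PBT → PBT
  | t, .leaf => t
  | t, .node l r => .node (treeOver t l) r

/-- `under t s = t \ s`: grafting of the root of `s` on the right-most leaf of `t`. -/
def under : PBT → PBT → PBT
  | .leaf, s => s
  | .node l r, s => .node l (under r s)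

/-- Membership in `M_k` (for `k = m.length ≥ 1`): a tuple of non-negative integers
`(m_1, …, m_k)` with `m_1 + ⋯ + m_k = k` and `m_1 + ⋯ + m_h ≥ h` for `h = 1, …, k-1`. -/
def inM (m : List ℕ) : Prop :=
  m ≠ [] ∧ m.sum = m.length ∧ ∀ h < m.length, h ≤ (m.take h).sum

/-- A tuple in some `M_k` is decomposable if it is the concatenation of a tuple in `M_l`
and a tuple in `M_{k-l}` for some `0 < l < k`. -/
def decomposable (m : List ℕ) : Prop :=
  ∃ u v : List ℕ, inM u ∧ inM v ∧ m = u ++ v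

/-!
`Φ` is the inverse of the encoding `Ψ = PBT.toTuple` given by `Ψ(leaf) = ()` and
`Ψ(l ∨ r) = Ψ(l / Y) ++ Ψ(r)`, where `Ψ(l / Y) = raise Ψ(l)` is `Ψ(l) ++ (0)` with its first
entry increased by one; so `Ψ` turns `\` into concatenation and `/ Y` into `raise`.
Every `Ψ(t)` is balanced (`m_1 + ⋯ + m_h ≥ h`, with equality at `h = k`).
In `Ψ(l ∨ r)` the first `h ≥ 1` with `m_1 + ⋯ + m_h = h` is `h = |l| + 1`, which makes `Ψ`
injective; conversely, cutting a nonempty balanced tuple at this first return writes it as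
`raise x ++ y` with `x`, `y` balanced, which makes `Ψ` onto the balanced tuples.
-/

-- `inM m` unfolds to `m ≠ [] ∧ IsBalanced m`; the empty tuple encodes the leaf.
def IsBalanced (m : List ℕ) : Prop :=
  m.sum = m.length ∧ ∀ h < m.length, h ≤ (m.take h).sum

def raise (x : List ℕ) : List ℕ :=
  (x ++ [0]).modifyHead (· + 1)

@[simp] lemma raise_nil : raise [] = [1] := rfl

@[simp] lemma raise_cons (a : ℕ) (x : List ℕ) : raise (a :: x) = (a + 1) :: (x ++ [0]) := rfl

@[simp] lemma raise_ne_nil (x : List ℕ) : raise x ≠ [] := by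
  cases x <;> simp

@[simp] lemma length_raise (x : List ℕ) : (raise x).length = x.length + 1 := by
  simp [raise]

lemma sum_raise (x : List ℕ) : (raise x).sum = x.sum + 1 := by
  cases x <;> simp [add_right_comm]

lemma sum_take_raise (x : List ℕ) {j : ℕ} (hj : 0 < j) :
    ((raise x).take j).sum = ((x ++ [0]).take j).sum + 1 := by
  obtain ⟨j, rfl⟩ := Nat.exists_eq_add_one_of_ne_zero hj.ne'
  cases x <;> simp [List.take_succ_cons, add_right_comm]

lemma raise_injective : Function.Injective raise := by
  intro x y h
  cases x <;> cases y <;> simp_all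

namespace IsBalanced

variable {m p u v x x' : List ℕ}

lemma nil : IsBalanced [] := ⟨rfl, by simp⟩

lemma min_le_sum_take (hm : IsBalanced m) (h : ℕ) : min h m.length ≤ (m.take h).sum := by
  rcases lt_or_ge h m.length with hlt | hge
  · simpa [min_eq_left hlt.le] using hm.2 h hlt
  · rw [min_eq_right hge, List.take_of_length_le hge, hm.1]

lemma append (hu : IsBalanced u) (hv : IsBalanced v) : IsBalanced (u ++ v) := by
  refine ⟨by simp [hu.1, hv.1], fun h _ => ?_⟩
  have hu' := hu.min_le_sum_take h
  have hv' := hv.min_le_sum_take (h - u.length)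
  simp only [List.take_append, List.sum_append, List.length_append] at *
  omega

lemma take_of_sum_take_eq (hm : IsBalanced m) {h : ℕ} (hh : h ≤ m.length)
    (hsum : (m.take h).sum = h) : IsBalanced (m.take h) := by
  refine ⟨by simp [hsum, hh], fun j hj => ?_⟩
  rw [List.length_take, min_eq_left hh] at hj
  rw [List.take_take, min_eq_left hj.le]
  exact hm.2 j (by omega)

lemma drop_of_sum_take_eq (hm : IsBalanced m) {h : ℕ} (hh : h ≤ m.length)
    (hsum : (m.take h).sum = h) : IsBalanced (m.drop h) := by
  have hsplit := List.sum_take_add_sum_drop m h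
  refine ⟨by have := hm.1; simp; omega, fun j hj => ?_⟩
  have := hm.min_le_sum_take (h + j)
  simp only [List.length_drop, List.take_add, List.sum_append] at *
  omega

lemma raise (hx : IsBalanced x) : IsBalanced (_root_.raise x) := by
  refine ⟨by simp [sum_raise, hx.1], fun j hj => ?_⟩
  rcases Nat.eq_zero_or_pos j with rfl | hj0
  · simp
  have := hx.min_le_sum_take j
  rw [sum_take_raise x hj0, List.take_append, List.sum_append]
  simp only [length_raise] at hj
  omega

lemma lt_sum_take_raise_append (hx : IsBalanced x) (y : List ℕ) {j : ℕ} (hj0 : 0 < j)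
    (hj : j ≤ x.length) : j < ((_root_.raise x ++ y).take j).sum := by
  have := hx.min_le_sum_take j
  rw [List.take_append_of_le_length (by simp; omega), sum_take_raise x hj0,
    List.take_append_of_le_length hj]
  omega


lemma exists_eq_raise (hp : IsBalanced p) (hne : p ≠ [])
    (hstrict : ∀ j, 0 < j → j < p.length → j < (p.take j).sum) :
    ∃ x, IsBalanced x ∧ p = _root_.raise x := by
  obtain ⟨q, b, rfl⟩ := (List.eq_nil_or_concat' p).resolve_left hne
  have hsum := hp.1
  cases q with
  | nil => exact ⟨[], nil, by simp_all⟩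
  | cons a q =>
    have hlast := hstrict (q.length + 1) (by omega) (by simp)
    have hhead := hstrict 1 (by omega) (by simp)
    simp only [List.cons_append, List.sum_cons, List.sum_append, List.sum_nil, add_zero,
      List.length_cons, List.length_append, List.length_nil, zero_add, List.take_succ_cons,
      List.take_left', List.take_zero] at hsum hlast hhead
    obtain ⟨a, rfl⟩ : ∃ a', a = a' + 1 := ⟨a - 1, by omega⟩
    refine ⟨a :: q, ⟨by simp; omega, fun j hj => ?_⟩, by simp; omega⟩
    obtain _ | j := j
    · simp
    have := hstrict (j + 1) (by omega) (by simp at hj ⊢; omega)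
    simp only [List.length_cons] at hj
    simp only [List.cons_append, List.take_succ_cons, List.sum_cons,
      List.take_append_of_le_length (show j ≤ q.length by omega)] at this ⊢
    omega

lemma exists_eq_raise_append (hm : IsBalanced m) (hne : m ≠ []) :
    ∃ x y, IsBalanced x ∧ IsBalanced y ∧ m = _root_.raise x ++ y := by
  have hret : ∃ h, 0 < h ∧ (m.take h).sum = h :=
    ⟨m.length, List.length_pos_iff.mpr hne, by rw [List.take_length, hm.1]⟩
  classical
  set h := Nat.find hret
  obtain ⟨hpos, hsum⟩ : 0 < h ∧ (m.take h).sum = h := Nat.find_spec hret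
  have hle : h ≤ m.length := Nat.find_min' hret ⟨List.length_pos_iff.mpr hne, by
    rw [List.take_length, hm.1]⟩
  have hstrict : ∀ j, 0 < j → j < (m.take h).length → j < ((m.take h).take j).sum := by
    intro j hj0 hj
    rw [List.length_take, min_eq_left hle] at hj
    rw [List.take_take, min_eq_left hj.le]
    exact lt_of_le_of_ne (hm.2 j (by omega)) fun heq => Nat.find_min hret hj ⟨hj0, heq.symm⟩
  obtain ⟨x, hx, hxm⟩ := (hm.take_of_sum_take_eq hle hsum).exists_eq_raise
    (fun hnil => by rw [hnil] at hsum; simp at hsum; omega) hstrict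
  exact ⟨x, m.drop h, hx, hm.drop_of_sum_take_eq hle hsum,
    by rw [← hxm, List.take_append_drop]⟩

lemma length_eq_of_raise_append_eq (hx : IsBalanced x) (hx' : IsBalanced x') {y y' : List ℕ}
    (h : _root_.raise x ++ y = _root_.raise x' ++ y') : x.length = x'.length := by
  have key : ∀ {x x' y y' : List ℕ}, IsBalanced x → IsBalanced x' →
      _root_.raise x ++ y = _root_.raise x' ++ y' → ¬ x.length < x'.length := by
    intro x x' y y' hx hx' h hlt
    have hret : ((_root_.raise x ++ y).take (x.length + 1)).sum = x.length + 1 := by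
      rw [List.take_left' (length_raise x), sum_raise, hx.1]
    rw [h] at hret
    exact (hx'.lt_sum_take_raise_append y' (Nat.succ_pos _) hlt).ne' hret
  exact le_antisymm (not_lt.mp (key hx' hx h.symm)) (not_lt.mp (key hx hx' h))

end IsBalanced

namespace PBT

instance : Inhabited PBT := ⟨leaf⟩

def toTuple : PBT → List ℕ
  | leaf => []
  | node l r => raise l.toTuple ++ r.toTuple

lemma length_toTuple (t : PBT) : t.toTuple.length = t.size := by
  induction t with
  | leaf => rfl
  | node l r ihl ihr =>
    simp only [toTuple, size, List.length_append, length_raise, ihl, ihr]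
    omega

lemma isBalanced_toTuple (t : PBT) : IsBalanced t.toTuple := by
  induction t with
  | leaf => exact IsBalanced.nil
  | node l r ihl ihr => exact ihl.raise.append ihr

lemma toTuple_under (t s : PBT) : (under t s).toTuple = t.toTuple ++ s.toTuple := by
  induction t with
  | leaf => rfl
  | node l r _ ihr => simp [under, toTuple, ihr]

lemma toTuple_injective : Function.Injective toTuple := by
  intro t
  induction t with
  | leaf =>
    rintro (_ | ⟨l, r⟩) h
    · rfl
    · simp [toTuple] at h
  | node l r ihl ihr =>
    rintro (_ | ⟨l', r'⟩) h
    · simp [toTuple] at h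
    · have hlen := (isBalanced_toTuple l).length_eq_of_raise_append_eq (isBalanced_toTuple l') h
      obtain ⟨hl, hr⟩ := List.append_inj h (by simp [hlen])
      rw [ihl (raise_injective hl), ihr hr]

lemma exists_toTuple_eq {m : List ℕ} (hm : IsBalanced m) : ∃ t : PBT, t.toTuple = m := by
  induction hlen : m.length using Nat.strong_induction_on generalizing m with
  | _ k ih =>
    rcases eq_or_ne m [] with rfl | hne
    · exact ⟨leaf, rfl⟩
    obtain ⟨x, y, hx, hy, rfl⟩ := hm.exists_eq_raise_append hne
    simp only [List.length_append, length_raise] at hlen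
    obtain ⟨l, rfl⟩ := ih _ (by omega) hx rfl
    obtain ⟨r, rfl⟩ := ih _ (by omega) hy rfl
    exact ⟨node l r, rfl⟩

end PBT

open PBT

noncomputable def Phi : List ℕ → PBT :=
  Function.invFun toTuple

lemma Phi_toTuple (t : PBT) : Phi t.toTuple = t :=
  Function.leftInverse_invFun toTuple_injective t

lemma toTuple_Phi {m : List ℕ} (hm : IsBalanced m) : (Phi m).toTuple = m :=
  Function.invFun_eq (exists_toTuple_eq hm)

lemma Phi_append {u v : List ℕ} (hu : IsBalanced u) (hv : IsBalanced v) :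
    Phi (u ++ v) = under (Phi u) (Phi v) := by
  rw [← toTuple_Phi hu, ← toTuple_Phi hv, ← toTuple_under, Phi_toTuple, Phi_toTuple,
    Phi_toTuple]

lemma Phi_raise {x : List ℕ} (hx : IsBalanced x) :
    Phi (raise x) = treeOver (Phi x) (.node .leaf .leaf) := by
  rw [← toTuple_Phi hx, Phi_toTuple, ← List.append_nil (raise _)]
  exact Phi_toTuple (.node _ .leaf)

lemma exists_eq_raise_of_not_decomposable {m : List ℕ} (hm : inM m) (hnd : ¬ decomposable m) :
    ∃ x, IsBalanced x ∧ m = raise x := by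
  have hbal : IsBalanced m := hm.2
  refine hbal.exists_eq_raise hm.1 fun j hj0 hj => (hbal.2 j hj).lt_of_ne fun hsum => hnd ?_
  have hle : j ≤ m.length := hj.le
  refine ⟨m.take j, m.drop j,
    ⟨List.ne_nil_of_length_pos (by simp; omega), hbal.take_of_sum_take_eq hle hsum.symm⟩,
    ⟨List.ne_nil_of_length_pos (by simp; omega), hbal.drop_of_sum_take_eq hle hsum.symm⟩,
    (List.take_append_drop j m).symm⟩

lemma Phi_cons_append_zero {a : ℕ} {rest : List ℕ} (hm : inM ((a :: rest) ++ [0]))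
    (hnd : ¬ decomposable ((a :: rest) ++ [0])) :
    Phi ((a :: rest) ++ [0]) = treeOver (Phi ((a - 1) :: rest)) (.node .leaf .leaf) := by
  obtain ⟨x, hx, hm_eq⟩ := exists_eq_raise_of_not_decomposable hm hnd
  rw [hm_eq, Phi_raise hx]
  obtain _ | ⟨b, x⟩ := x
  · simp at hm_eq
  · obtain ⟨rfl, rfl⟩ : a = b + 1 ∧ rest = x := by simpa using hm_eq
    rw [Nat.add_sub_cancel]

lemma bijOn_Phi {k : ℕ} (hk : 1 ≤ k) :
    Set.BijOn Phi {m : List ℕ | inM m ∧ m.length = k} {t : PBT | t.size = k} := by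
  refine Set.InvOn.bijOn (f' := toTuple)
    ⟨fun m hm => toTuple_Phi hm.1.2, fun t _ => Phi_toTuple t⟩ (fun m hm => ?_) (fun t ht => ?_)
  · change (Phi m).size = k
    rw [← length_toTuple, toTuple_Phi hm.1.2, hm.2]
  · change t.size = k at ht
    refine ⟨⟨?_, isBalanced_toTuple t⟩, by rw [length_toTuple, ht]⟩
    rw [← List.length_pos_iff, length_toTuple, ht]
    exact hk

/-- There is a bijection `Φ` between `M_k` and the set `Y_k` of planar binary trees with
`k` internal vertices, satisfying the recursive clauses: `Φ((1))` is the one-vertex tree `Y`;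
`Φ(m' ++ m'') = Φ(m') \ Φ(m'')` for `m' ∈ M_l`, `m'' ∈ M_{k-l}`; and for indecomposable
`m = (m_1, …, m_{k-1}, 0)` (where necessarily `m_1 > 1`),
`Φ(m) = Φ((m_1 - 1, m_2, …, m_{k-1})) / Y`. -/
theorem exists_tree_bijection :
    ∃ Φ : List ℕ → PBT,
      Φ [1] = PBT.node .leaf .leaf ∧
      (∀ u v : List ℕ, inM u → inM v → Φ (u ++ v) = under (Φ u) (Φ v)) ∧
      (∀ (m₁ : ℕ) (rest : List ℕ), inM ((m₁ :: rest) ++ [0]) →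
        ¬ decomposable ((m₁ :: rest) ++ [0]) →
        Φ ((m₁ :: rest) ++ [0]) = treeOver (Φ ((m₁ - 1) :: rest)) (PBT.node .leaf .leaf)) ∧
      (∀ k : ℕ, 1 ≤ k →
        Set.BijOn Φ {m : List ℕ | inM m ∧ m.length = k} {t : PBT | t.size = k}) :=
  ⟨Phi, Phi_toTuple (.node .leaf .leaf), fun _ _ hu hv => Phi_append hu.2 hv.2,
    fun _ _ => Phi_cons_append_zero, fun _ => bijOn_Phi⟩
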